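/- arXiv:2506.13710 — 2 statements merged into one kernel-verified Lean document; each statement's English description precedes it below -/
import Mathlib

section
/- Let H ⪰ 0 be symmetric, B ≻ 0 symmetric, g ≠ 0, γ > 0, and x⁺ := x − (H + (‖g‖_*/γ)B)^{-1} g. Let A be any symmetric matrix (the true Hessian). Then ⟨A(x⁺−x), x⁺−x⟩ ≤ ⟨g, x−x⁺⟩ + ‖x⁺−x‖·(‖(A−H)(x⁺−x)‖_* − (‖g‖_*·‖x⁺−x‖)/γ). -/
open Matrix

noncomputable def normB {n : ℕ} (B : Matrix (Fin n) (Fin n) ℝ) (h : Fin n → ℝ) : ℝ :=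
  Real.sqrt (h ⬝ᵥ B *ᵥ h)

noncomputable def dualNormB {n : ℕ} (B : Matrix (Fin n) (Fin n) ℝ) (s : Fin n → ℝ) : ℝ :=
  Real.sqrt (s ⬝ᵥ B⁻¹ *ᵥ s)

/-! Put `s = x⁺ - x` and `r = ‖g‖_*/γ`. Since `H + rB` is positive definite, `s` solves
`(H + rB) s = -g`, so splitting `A = (A - H) + H` gives
`⟨A s, s⟩ = ⟨(A - H) s, s⟩ - ⟨g, s⟩ - r ‖s‖²`, and Cauchy–Schwarz for the inner product
defined by `B` bounds the first term by `‖s‖ ‖(A - H) s‖_*`. -/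

theorem Matrix.PosSemidef.dotProduct_mulVec_le_sqrt_mul_sqrt {ι : Type*} [Fintype ι]
    {P : Matrix ι ι ℝ} (hP : P.PosSemidef) (a b : ι → ℝ) :
    a ⬝ᵥ P *ᵥ b ≤ √(a ⬝ᵥ P *ᵥ a) * √(b ⬝ᵥ P *ᵥ b) := by
  let := P.toSeminormedAddCommGroup hP
  let := P.toInnerProductSpace hP
  have hinner (x y : ι → ℝ) : inner ℝ x y = x ⬝ᵥ P *ᵥ y := by
    change (P *ᵥ y) ⬝ᵥ star x = _
    rw [star_trivial, dotProduct_comm]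
  have hcs := real_inner_mul_inner_self_le a b
  rw [hinner, hinner, hinner] at hcs
  rw [← Real.sqrt_mul (by simpa using hP.dotProduct_mulVec_nonneg a)]
  exact Real.le_sqrt_of_sq_le ((sq _).trans_le hcs)

theorem Matrix.mulVec_nonsing_inv_mulVec {ι α : Type*} [Fintype ι] [DecidableEq ι] [CommRing α]
    {M : Matrix ι ι α} (hM : IsUnit M) (v : ι → α) : M *ᵥ (M⁻¹ *ᵥ v) = v := by
  rw [mulVec_mulVec, mul_nonsing_inv M ((isUnit_iff_isUnit_det M).mp hM), one_mulVec]

section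

variable {n : ℕ} {B : Matrix (Fin n) (Fin n) ℝ}

theorem normB_mul_self (hB : B.PosSemidef) (s : Fin n → ℝ) :
    normB B s * normB B s = s ⬝ᵥ B *ᵥ s :=
  Real.mul_self_sqrt (by simpa using hB.dotProduct_mulVec_nonneg s)

theorem dualNormB_pos (hB : B.PosDef) {g : Fin n → ℝ} (hg : g ≠ 0) : 0 < dualNormB B g :=
  Real.sqrt_pos.mpr (by simpa using hB.inv.dotProduct_mulVec_pos hg)

theorem dotProduct_le_normB_mul_dualNormB (hB : B.PosDef) (s u : Fin n → ℝ) :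
    s ⬝ᵥ u ≤ normB B s * dualNormB B u := by
  have hBu : B *ᵥ (B⁻¹ *ᵥ u) = u := mulVec_nonsing_inv_mulVec hB.isUnit u
  have hdual : (B⁻¹ *ᵥ u) ⬝ᵥ B *ᵥ (B⁻¹ *ᵥ u) = u ⬝ᵥ B⁻¹ *ᵥ u := by
    rw [hBu, dotProduct_comm]
  calc s ⬝ᵥ u = s ⬝ᵥ B *ᵥ (B⁻¹ *ᵥ u) := by rw [hBu]
    _ ≤ normB B s * dualNormB B u := by
      rw [normB, dualNormB, ← hdual]
      exact hB.posSemidef.dotProduct_mulVec_le_sqrt_mul_sqrt _ _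

theorem dotProduct_mulVec_le_of_regularized_newton_eq {H : Matrix (Fin n) (Fin n) ℝ}
    (A : Matrix (Fin n) (Fin n) ℝ) (hB : B.PosDef) {r : ℝ} {g s : Fin n → ℝ}
    (hs : (H + r • B) *ᵥ s = -g) :
    s ⬝ᵥ A *ᵥ s ≤ -(g ⬝ᵥ s) + normB B s * (dualNormB B ((A - H) *ᵥ s) - r * normB B s) := by
  have hHs : H *ᵥ s = -g - r • (B *ᵥ s) := by
    rw [add_mulVec, smul_mulVec] at hs
    linear_combination (norm := module) hs
  have hsplit : s ⬝ᵥ A *ᵥ s = s ⬝ᵥ (A - H) *ᵥ s - g ⬝ᵥ s - r * (s ⬝ᵥ B *ᵥ s) := by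
    rw [sub_mulVec, dotProduct_sub, hHs, dotProduct_sub, dotProduct_neg, dotProduct_smul,
      dotProduct_comm s g, smul_eq_mul]
    ring
  rw [hsplit, ← normB_mul_self hB.posSemidef]
  nlinarith [dotProduct_le_normB_mul_dualNormB hB s ((A - H) *ᵥ s)]

end

theorem regularized_newton_step_local_bound_general {n : ℕ}
    (H B A : Matrix (Fin n) (Fin n) ℝ)
    (hH : H.PosSemidef) (hB : B.PosDef)
    (x g : Fin n → ℝ) (hg : g ≠ 0) (γ : ℝ) (hγ : 0 < γ)
    (xp : Fin n → ℝ)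
    (hxp : xp = x - (H + (dualNormB B g / γ) • B)⁻¹ *ᵥ g) :
    (xp - x) ⬝ᵥ A *ᵥ (xp - x)
      ≤ g ⬝ᵥ (x - xp) + normB B (xp - x) *
          (dualNormB B ((A - H) *ᵥ (xp - x)) - dualNormB B g * normB B (xp - x) / γ) := by
  have hM : (H + (dualNormB B g / γ) • B).PosDef :=
    PosDef.posSemidef_add hH (hB.smul (div_pos (dualNormB_pos hB hg) hγ))
  have hstep : (H + (dualNormB B g / γ) • B) *ᵥ (xp - x) = -g := by
    rw [hxp, sub_sub_cancel_left, mulVec_neg, mulVec_nonsing_inv_mulVec hM.isUnit]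
  rw [← neg_sub xp x, dotProduct_neg, mul_div_right_comm]
  exact dotProduct_mulVec_le_of_regularized_newton_eq A hB hstep

theorem regularized_newton_step_local_bound {n : ℕ}
    (H B A : Matrix (Fin n) (Fin n) ℝ)
    (hH : H.PosSemidef) (hB : B.PosDef) (hA : A.IsSymm)
    (x g : Fin n → ℝ) (hg : g ≠ 0) (γ : ℝ) (hγ : 0 < γ)
    (xp : Fin n → ℝ)
    (hxp : xp = x - (H + (dualNormB B g / γ) • B)⁻¹ *ᵥ g) :
    (xp - x) ⬝ᵥ A *ᵥ (xp - x)
      ≤ g ⬝ᵥ (x - xp) + normB B (xp - x) *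
          (dualNormB B ((A - H) *ᵥ (xp - x)) - dualNormB B g * normB B (xp - x) / γ) :=
  regularized_newton_step_local_bound_general H B A hH hB x g hg γ hγ xp hxp
end

section
/- Let f : ℝⁿ → ℝ be convex C³ and generalized self-concordant of degree q ∈ [0,2) with constant G > 0, i.e., ∇³f(x)[h,h,u] ≤ G·⟨∇²f(x)h,h⟩^{q/2}·‖h‖^{2−q}·‖u‖ for all x, h, u. Then for all x, y, h: ⟨∇²f(y)h,h⟩^{(2−q)/2} ≤ ⟨∇²f(x)h,h⟩^{(2−q)/2} + ((2−q)/2)·G·‖h‖^{2−q}·‖y−x‖. -/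
/-!
Restrict to the segment: `φ t = ∇²f(x + t(y - x))[h, h]` is nonnegative by convexity, and its
derivative `∇³f(x + t(y - x))[y - x, h, h]` is, by symmetry of `∇³f` and the self-concordance
bound applied to `±(y - x)`, at most `G ‖h‖^(2-q) ‖y - x‖ φ^(q/2)` in absolute value. The chain
rule then bounds the derivative of `φ^((2-q)/2)` by `(2-q)/2 · G ‖h‖^(2-q) ‖y - x‖`, and the mean
value theorem gives the claim. Where `φ` vanishes, `φ^((2-q)/2)` need not be differentiable, so
the argument is run for `φ + ε` and `ε → 0`.
-/

open Set Filter Topology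

section IteratedFDeriv

variable {E F : Type*} [NormedAddCommGroup E] [NormedSpace ℝ E] [NormedAddCommGroup F]
  [NormedSpace ℝ F] {f : E → F}

theorem hasDerivAt_iteratedFDeriv_add_smul {n : WithTop ℕ∞} {k : ℕ} (hf : ContDiff ℝ n f)
    (hk : k < n) (x d : E) (m : Fin k → E) (t : ℝ) :
    HasDerivAt (fun s : ℝ ↦ iteratedFDeriv ℝ k f (x + s • d) m)
      (iteratedFDeriv ℝ (k + 1) f (x + t • d) (Fin.cons d m)) t := by
  have hline : HasDerivAt (fun s : ℝ ↦ x + s • d) d t := by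
    simpa using ((hasDerivAt_id t).smul_const d).const_add x
  have hD := ((hf.differentiable_iteratedFDeriv hk).differentiableAt (x := x + t • d)).hasFDerivAt
  exact (hD.continuousMultilinear_apply_const m).comp_hasDerivAt t hline

theorem ContDiff.iteratedFDeriv_two_apply_comm (hf : ContDiff ℝ 2 f) (x v w : E) :
    iteratedFDeriv ℝ 2 f x ![v, w] = iteratedFDeriv ℝ 2 f x ![w, v] :=
  IsSymmSndFDerivAt.iteratedFDeriv_cons
    (hf := hf.contDiffAt.isSymmSndFDerivAt (by simp [minSmoothness_of_isRCLikeNormedField]))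

theorem ContDiff.iteratedFDeriv_three_apply_swap_left (hf : ContDiff ℝ 3 f) (x u v w : E) :
    iteratedFDeriv ℝ 3 f x ![u, v, w] = iteratedFDeriv ℝ 3 f x ![v, u, w] := by
  have hinit (a b c : E) : Fin.init ![a, b, c] = ![a, b] := by
    ext i; fin_cases i <;> rfl
  rw [iteratedFDeriv_succ_apply_right (n := 2) ![u, v, w],
    iteratedFDeriv_succ_apply_right (n := 2) ![v, u, w], hinit, hinit,
    (hf.fderiv_right (m := 2) le_rfl).iteratedFDeriv_two_apply_comm x u v]
  rfl

theorem ContDiff.iteratedFDeriv_three_apply_swap_right (hf : ContDiff ℝ 3 f) (x u v w : E) :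
    iteratedFDeriv ℝ 3 f x ![u, v, w] = iteratedFDeriv ℝ 3 f x ![u, w, v] := by
  have hD := (hf.differentiable_iteratedFDeriv (m := 2) (by norm_num)) x
  rw [hD.iteratedFDeriv_succ_apply_left', hD.iteratedFDeriv_succ_apply_left']
  simp [(hf.of_le (by norm_num)).iteratedFDeriv_two_apply_comm _ v w]

theorem ConvexOn.iteratedFDeriv_two_nonneg {f : E → ℝ} (hconv : ConvexOn ℝ univ f)
    (hf : ContDiff ℝ 2 f) (x h : E) : 0 ≤ iteratedFDeriv ℝ 2 f x ![h, h] := by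
  have hg (t : ℝ) : HasDerivAt (fun s : ℝ ↦ f (x + s • h)) (fderiv ℝ f (x + t • h) h) t := by
    simpa using hasDerivAt_iteratedFDeriv_add_smul hf (k := 0) (by norm_num) x h ![] t
  have hconv_line : ConvexOn ℝ univ (fun s : ℝ ↦ f (x + s • h)) :=
    (hconv.translate_right x).comp_linearMap (LinearMap.toSpanSingleton ℝ E h)
  have hmono : Monotone fun t : ℝ ↦ fderiv ℝ f (x + t • h) h := by
    have := hconv_line.monotoneOn_deriv fun s _ ↦ (hg s).differentiableAt
    rwa [funext fun t ↦ (hg t).deriv, monotoneOn_univ] at this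
  simpa using (hasDerivAt_iteratedFDeriv_add_smul hf (k := 1) (by norm_num) x h ![h] 0
    |>.nonneg_of_monotone (by simpa using hmono))

theorem ContDiff.abs_iteratedFDeriv_three_le {f : E → ℝ} (hf : ContDiff ℝ 3 f) {x h : E} {M : ℝ}
    (hM : ∀ u, iteratedFDeriv ℝ 3 f x ![h, h, u] ≤ M * ‖u‖) (u : E) :
    |iteratedFDeriv ℝ 3 f x ![u, h, h]| ≤ M * ‖u‖ := by
  have hsymm (v : E) : iteratedFDeriv ℝ 3 f x ![v, h, h] = iteratedFDeriv ℝ 3 f x ![h, h, v] := by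
    rw [hf.iteratedFDeriv_three_apply_swap_left, hf.iteratedFDeriv_three_apply_swap_right]
  have hneg : iteratedFDeriv ℝ 3 f x ![-u, h, h] = -iteratedFDeriv ℝ 3 f x ![u, h, h] := by
    simp only [iteratedFDeriv_succ_apply_left (n := 2), Fin.isValue, Matrix.cons_val_zero,
      map_neg, Fin.tail_vecCons, neg_apply]
  refine abs_le.2 ⟨?_, (hsymm u).trans_le (hM u)⟩
  have := (hsymm (-u)).trans_le (hM (-u))
  rw [hneg, norm_neg] at this
  linarith

end IteratedFDeriv

section RpowLipschitz

variable {φ φ' : ℝ → ℝ} {r C : ℝ}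

theorem abs_rpow_sub_rpow_le_of_pos_of_abs_deriv_le (hφ : ∀ t, HasDerivAt φ (φ' t) t)
    (hpos : ∀ t, 0 < φ t) (hr : 0 ≤ r) (hbound : ∀ t, |φ' t| ≤ C * φ t ^ (1 - r)) (a b : ℝ) :
    |φ b ^ r - φ a ^ r| ≤ r * C * |b - a| := by
  have hderiv (t : ℝ) : HasDerivAt (fun s ↦ φ s ^ r) (φ' t * r * φ t ^ (r - 1)) t :=
    (hφ t).rpow_const (Or.inl (hpos t).ne')
  have hderiv_le (t : ℝ) : ‖φ' t * r * φ t ^ (r - 1)‖ ≤ r * C := by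
    have hcancel : φ t ^ (1 - r) * φ t ^ (r - 1) = 1 := by
      rw [← Real.rpow_add (hpos t), sub_add_sub_cancel', sub_self, Real.rpow_zero]
    calc ‖φ' t * r * φ t ^ (r - 1)‖ = |φ' t| * r * φ t ^ (r - 1) := by
          rw [Real.norm_eq_abs, abs_mul, abs_mul, abs_of_nonneg hr,
            abs_of_pos (Real.rpow_pos_of_pos (hpos t) _)]
      _ ≤ C * φ t ^ (1 - r) * r * φ t ^ (r - 1) := by
          gcongr
          exacts [(Real.rpow_pos_of_pos (hpos t) _).le, hbound t]
      _ = r * C := by linear_combination r * C * hcancel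
  simpa using convex_univ.norm_image_sub_le_of_norm_hasDerivWithin_le
    (fun t _ ↦ (hderiv t).hasDerivWithinAt) (fun t _ ↦ hderiv_le t) (mem_univ a) (mem_univ b)

theorem rpow_le_rpow_add_of_abs_deriv_le (hφ : ∀ t, HasDerivAt φ (φ' t) t)
    (hnonneg : ∀ t, 0 ≤ φ t) (hr0 : 0 ≤ r) (hr1 : r ≤ 1) (hC : 0 ≤ C)
    (hbound : ∀ t, |φ' t| ≤ C * φ t ^ (1 - r)) (a b : ℝ) :
    φ b ^ r ≤ φ a ^ r + r * C * |b - a| := by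
  have hreg (ε : ℝ) (hε : 0 < ε) : (φ b + ε) ^ r ≤ (φ a + ε) ^ r + r * C * |b - a| := by
    have hbound_reg (t : ℝ) : |φ' t| ≤ C * (φ t + ε) ^ (1 - r) := by
      refine (hbound t).trans ?_
      gcongr
      · exact hnonneg t
      · linarith
    have := abs_rpow_sub_rpow_le_of_pos_of_abs_deriv_le (fun t ↦ (hφ t).add_const ε)
      (fun t ↦ by linarith [hnonneg t]) hr0 hbound_reg a b
    linarith [le_abs_self ((φ b + ε) ^ r - (φ a + ε) ^ r)]
  have hlim (s : ℝ) : Tendsto (fun ε ↦ (s + ε) ^ r) (𝓝[>] 0) (𝓝 (s ^ r)) := by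
    have := (Real.continuousAt_rpow_const s r (Or.inr hr0)).tendsto.comp
      ((continuous_const_add s).tendsto' 0 s (add_zero s))
    exact this.mono_left nhdsWithin_le_nhds
  exact le_of_tendsto_of_tendsto (hlim _) ((hlim _).add_const _)
    (eventually_nhdsWithin_of_forall hreg)

end RpowLipschitz

theorem generalized_self_concordant_hessian_growth {n : ℕ}
    (f : EuclideanSpace ℝ (Fin n) → ℝ) (hf : ContDiff ℝ 3 f)
    (hconv : ConvexOn ℝ Set.univ f)
    (q G : ℝ) (hq0 : 0 ≤ q) (hq2 : q < 2) (hG : 0 < G)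
    (hgsc : ∀ x h u : EuclideanSpace ℝ (Fin n),
      iteratedFDeriv ℝ 3 f x ![h, h, u]
        ≤ G * (iteratedFDeriv ℝ 2 f x ![h, h]) ^ (q / 2) * ‖h‖ ^ (2 - q) * ‖u‖) :
    ∀ x y h : EuclideanSpace ℝ (Fin n),
      (iteratedFDeriv ℝ 2 f y ![h, h]) ^ ((2 - q) / 2)
        ≤ (iteratedFDeriv ℝ 2 f x ![h, h]) ^ ((2 - q) / 2) +
            (2 - q) / 2 * G * ‖h‖ ^ (2 - q) * ‖y - x‖ := by
  intro x y h
  set φ : ℝ → ℝ := fun t ↦ iteratedFDeriv ℝ 2 f (x + t • (y - x)) ![h, h]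
  have hφ (t : ℝ) : HasDerivAt φ (iteratedFDeriv ℝ 3 f (x + t • (y - x)) ![y - x, h, h]) t :=
    hasDerivAt_iteratedFDeriv_add_smul hf (by norm_num) x (y - x) ![h, h] t
  have hφ_nonneg (t : ℝ) : 0 ≤ φ t := hconv.iteratedFDeriv_two_nonneg (hf.of_le (by norm_num)) _ h
  have hbound (t : ℝ) : |iteratedFDeriv ℝ 3 f (x + t • (y - x)) ![y - x, h, h]|
      ≤ G * ‖h‖ ^ (2 - q) * ‖y - x‖ * φ t ^ (1 - (2 - q) / 2) := by
    calc _ ≤ G * φ t ^ (q / 2) * ‖h‖ ^ (2 - q) * ‖y - x‖ :=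
          hf.abs_iteratedFDeriv_three_le (hgsc _ h) _
      _ = _ := by rw [show 1 - (2 - q) / 2 = q / 2 by ring]; ring
  have := rpow_le_rpow_add_of_abs_deriv_le hφ hφ_nonneg (by linarith) (by linarith)
    (by positivity) hbound 0 1
  simp only [φ, zero_smul, one_smul, add_zero, add_sub_cancel, sub_zero, abs_one, mul_one] at this
  linarith
end
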